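/- arXiv:2201.11324 — 5 statements merged into one kernel-verified Lean document; each statement's English description precedes it below -/
import Mathlib

section
/- Let f : ℝ^d → ℝ be three times continuously differentiable on an open set containing the point x, and fix a coordinate i ∈ {1,…,d}. Define A_i(h) = 2^{−d} Σ_{Δ ∈ {−1,1}^d} (f(x+hΔ) − f(x−hΔ))/(2h Δ_i), the uniform average over all sign vectors of the simultaneous-perturbation difference quotient in direction i. Then lim_{h→0⁺} (A_i(h) − ∂_i f(x))/h² = (1/6)(∂³_{iii} f(x) + 3 Σ_{k≠i} ∂³_{ikk} f(x)). In particular the bias A_i(h) − ∂_i f(x) is O(h²) as h → 0⁺. -/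
/-!
Because `1 / Δᵢ = Δᵢ` and the average of `Δᵢ • Δ` over all sign vectors is `eᵢ`, the bias
`Aᵢ(h) - ∂ᵢ f(x)` is the average of `Δᵢ` times the error of the central difference quotient
`(f(x + hΔ) - f(x - hΔ)) / 2h` of `f` along `Δ`. Taylor's theorem along the line `t ↦ x + tΔ`
makes that error `h² D³f(x)(Δ,Δ,Δ) / 6 + o(h²)`, the even-order terms cancelling. Averaging
`Δᵢ D³f(x)(Δ,Δ,Δ)` is done by pairing `Δ` with the vector whose `i`-th sign is flipped: this
reduces it to the moments `∑ Δₐ Δ_b = 2^d [a = b]`, and symmetry of `D³f(x)` collects the terms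
into `D³f(x)(eᵢ,eᵢ,eᵢ) + 3 ∑_{k ≠ i} D³f(x)(eᵢ,eₖ,eₖ)`.
-/

open Finset Filter Asymptotics
open Topology

/-- The sign vector in `ℝ^d` associated with a Boolean vector: `1` where `true`, `-1` where
`false`. Ranging over all `s : Fin d → Bool` ranges over all sign vectors `Δ ∈ {-1,1}^d`. -/
noncomputable def signVec (d : ℕ) (s : Fin d → Bool) : EuclideanSpace ℝ (Fin d) :=
  WithLp.toLp 2 (fun k => if s k then (1 : ℝ) else -1)

lemma map_add_add_add_of_symm {E : Type*} [NormedAddCommGroup E] [NormedSpace ℝ E]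
    (M : E →L[ℝ] E →L[ℝ] E →L[ℝ] ℝ)
    (h01 : ∀ a b c, M a b c = M b a c) (h12 : ∀ a b c, M a b c = M a c b) (a b : E) :
    M (a + b) (a + b) (a + b) = M a a a + 3 * M b a a + 3 * M b b a + M b b b := by
  have e1 : M a b a = M b a a := h01 a b a
  have e2 : M a a b = M b a a := (h12 a a b).trans (h01 a b a)
  have e3 : M a b b = M b b a := (h01 a b b).trans (h12 b a b)
  have e4 : M b a b = M b b a := h12 b a b
  simp only [map_add, add_apply]
  linear_combination e1 + e2 + e3 + e4

section SignVectors

variable {d : ℕ}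

lemma signVec_apply (s : Fin d → Bool) (k : Fin d) :
    signVec d s k = if s k then 1 else -1 := rfl

lemma signVec_apply_mul_self (s : Fin d → Bool) (k : Fin d) :
    signVec d s k * signVec d s k = 1 := by
  rw [signVec_apply]; cases s k <;> norm_num

lemma inv_signVec_apply (s : Fin d → Bool) (k : Fin d) :
    (signVec d s k)⁻¹ = signVec d s k :=
  inv_eq_of_mul_eq_one_right (signVec_apply_mul_self s k)

def signFlip (i : Fin d) : Equiv.Perm (Fin d → Bool) :=
  Function.Involutive.toPerm (fun s => Function.update s i (!s i)) fun s => by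
    ext j
    by_cases hj : j = i
    · subst hj; simp
    · simp [Function.update_of_ne hj]

lemma signFlip_apply (i : Fin d) (s : Fin d → Bool) :
    signFlip i s = Function.update s i (!s i) := rfl

lemma signVec_signFlip_apply (i : Fin d) (s : Fin d → Bool) (k : Fin d) :
    signVec d (signFlip i s) k = if k = i then -signVec d s k else signVec d s k := by
  simp only [signFlip_apply, signVec_apply]
  by_cases hk : k = i
  · subst hk; cases s k <;> simp
  · simp [hk]

lemma signVec_signFlip (i : Fin d) (s : Fin d → Bool) :
    signVec d (signFlip i s) = signVec d s - (2 * signVec d s i) • EuclideanSpace.single i 1 := by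
  ext k
  rw [signVec_signFlip_apply]
  by_cases hk : k = i
  · subst hk; simp; ring
  · simp [hk]

lemma sum_eq_zero_of_signFlip (i : Fin d) {F : (Fin d → Bool) → ℝ}
    (hF : ∀ s, F (signFlip i s) = -F s) : ∑ s, F s = 0 := by
  have h := Equiv.sum_comp (signFlip i) F
  simp only [hF, sum_neg_distrib] at h
  linarith

lemma sum_signVec_mul_signVec (a b : Fin d) :
    ∑ s : Fin d → Bool, signVec d s a * signVec d s b = if a = b then 2 ^ d else 0 := by
  split_ifs with hab
  · subst hab
    simp [signVec_apply_mul_self]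
  · refine sum_eq_zero_of_signFlip a fun s => ?_
    simp [signVec_signFlip_apply, Ne.symm hab]

lemma sum_signVec_smul_signVec (a : Fin d) :
    ∑ s : Fin d → Bool, signVec d s a • signVec d s
      = (2 ^ d : ℝ) • EuclideanSpace.single a 1 := by
  ext k
  simp only [WithLp.ofLp_sum, Finset.sum_apply, PiLp.smul_apply, smul_eq_mul,
    sum_signVec_mul_signVec, PiLp.single_apply]
  split_ifs <;> simp_all [eq_comm]

lemma sum_signVec_mul_map (L : EuclideanSpace ℝ (Fin d) →L[ℝ] ℝ) (a : Fin d) :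
    ∑ s : Fin d → Bool, signVec d s a * L (signVec d s)
      = 2 ^ d * L (EuclideanSpace.single a 1) := by
  rw [← smul_eq_mul (2 ^ d : ℝ), ← map_smul, ← sum_signVec_smul_signVec, map_sum]
  simp

lemma inv_two_pow_mul_sum_div_mul_signVec_sub (L : EuclideanSpace ℝ (Fin d) →L[ℝ] ℝ) (i : Fin d)
    (q : (Fin d → Bool) → ℝ) (c : ℝ) :
    (2 ^ d : ℝ)⁻¹ * ∑ s, q s / (c * signVec d s i) - L (EuclideanSpace.single i 1)
      = (2 ^ d : ℝ)⁻¹ * ∑ s, signVec d s i * (q s / c - L (signVec d s)) := by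
  rw [← inv_mul_cancel_left₀ (by positivity : (2 ^ d : ℝ) ≠ 0) (L _), ← sum_signVec_mul_map,
    ← mul_sub, ← sum_sub_distrib]
  congr 1
  refine sum_congr rfl fun s _ => ?_
  rw [← div_div, div_eq_mul_inv _ (signVec d s i), inv_signVec_apply]
  ring

lemma sum_map_signVec_signVec
    (B : EuclideanSpace ℝ (Fin d) →L[ℝ] EuclideanSpace ℝ (Fin d) →L[ℝ] ℝ) :
    ∑ s : Fin d → Bool, B (signVec d s) (signVec d s)
      = 2 ^ d * ∑ k, B (EuclideanSpace.single k 1) (EuclideanSpace.single k 1) := by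
  have expand (v : EuclideanSpace ℝ (Fin d)) :
      B v v = ∑ k, v k * B (EuclideanSpace.single k 1) v := by
    have hv : B v = ∑ k, v k • B (EuclideanSpace.single k 1) := by
      conv_lhs => rw [← (EuclideanSpace.basisFun (Fin d) ℝ).sum_repr v]
      simp
    simp [hv]
  rw [sum_congr rfl fun s _ => expand (signVec d s), Finset.sum_comm, mul_sum]
  simp only [sum_signVec_mul_map]

lemma sum_signVec_mul_map_signVec_signVec_signVec
    (M : EuclideanSpace ℝ (Fin d) →L[ℝ] EuclideanSpace ℝ (Fin d) →L[ℝ]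
      EuclideanSpace ℝ (Fin d) →L[ℝ] ℝ)
    (h01 : ∀ a b c, M a b c = M b a c) (h12 : ∀ a b c, M a b c = M a c b) (i : Fin d) :
    ∑ s : Fin d → Bool, signVec d s i * M (signVec d s) (signVec d s) (signVec d s)
      = 2 ^ d * (M (EuclideanSpace.single i 1) (EuclideanSpace.single i 1)
            (EuclideanSpace.single i 1)
          + 3 * ∑ k ∈ univ.erase i, M (EuclideanSpace.single i 1)
              (EuclideanSpace.single k 1) (EuclideanSpace.single k 1)) := by
  set e : EuclideanSpace ℝ (Fin d) := EuclideanSpace.single i 1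
  set F : (Fin d → Bool) → ℝ := fun s =>
    signVec d s i * M (signVec d s) (signVec d s) (signVec d s)
  have pair (s : Fin d → Bool) : F s + F (signFlip i s)
      = 6 * M e (signVec d s) (signVec d s) - 12 * (signVec d s i * M e e (signVec d s))
        + 8 * M e e e := by
    have hu := signVec_apply_mul_self s i
    have hflip_i : signVec d (signFlip i s) i = -signVec d s i := by
      simp [signVec_signFlip_apply]
    have hflip : signVec d (signFlip i s) = signVec d s + (-(2 * signVec d s i)) • e := by
      rw [signVec_signFlip, neg_smul, sub_eq_add_neg]
    simp only [F]
    rw [hflip_i, hflip, map_add_add_add_of_symm M h01 h12]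
    simp only [map_smul, smul_apply, smul_eq_mul]
    linear_combination (6 * M e (signVec d s) (signVec d s)
      - 12 * signVec d s i * M e e (signVec d s)
      + 8 * (signVec d s i * signVec d s i + 1) * M e e e) * hu
  have hS : 2 * ∑ s, F s = ∑ s, (F s + F (signFlip i s)) := by
    rw [sum_add_distrib, Equiv.sum_comp, two_mul]
  simp only [pair, sum_add_distrib, sum_sub_distrib, ← mul_sum, sum_const, card_univ,
    Fintype.card_fun, Fintype.card_bool, Fintype.card_fin, sum_map_signVec_signVec,
    sum_signVec_mul_map, ← add_sum_erase univ _ (mem_univ i)] at hS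
  linear_combination hS / 2

end SignVectors

section ThirdDerivative

variable {E F : Type*} [NormedAddCommGroup E] [NormedSpace ℝ E]
  [NormedAddCommGroup F] [NormedSpace ℝ F] {f : E → F} {x : E}

lemma iteratedFDeriv_three_apply (f : E → F) (x : E) (m : Fin 3 → E) :
    iteratedFDeriv ℝ 3 f x m = fderiv ℝ (fderiv ℝ (fderiv ℝ f)) x (m 0) (m 1) (m 2) := by
  rw [iteratedFDeriv_succ_apply_right, iteratedFDeriv_two_apply]
  rfl

lemma ContDiffAt.fderiv_fderiv_fderiv_comm_left (hf : ContDiffAt ℝ 3 f x) (a b c : E) :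
    fderiv ℝ (fderiv ℝ (fderiv ℝ f)) x a b c = fderiv ℝ (fderiv ℝ (fderiv ℝ f)) x b a c := by
  rw [((hf.fderiv_right (m := 2) le_rfl).isSymmSndFDerivAt (by simp)).eq a b]

lemma ContDiffAt.fderiv_fderiv_fderiv_comm_right (hf : ContDiffAt ℝ 3 f x) (a b c : E) :
    fderiv ℝ (fderiv ℝ (fderiv ℝ f)) x a b c = fderiv ℝ (fderiv ℝ (fderiv ℝ f)) x a c b := by
  have hd : DifferentiableAt ℝ (iteratedFDeriv ℝ 2 f) x :=
    hf.differentiableAt_iteratedFDeriv (by norm_num)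
  have hsymm : (fun y => iteratedFDeriv ℝ 2 f y ![b, c])
      =ᶠ[𝓝 x] fun y => iteratedFDeriv ℝ 2 f y ![c, b] := by
    filter_upwards [hf.eventually (by simp)] with y hy
    exact IsSymmSndFDerivAt.iteratedFDeriv_cons (hf := hy.isSymmSndFDerivAt (by norm_num))
  calc fderiv ℝ (fderiv ℝ (fderiv ℝ f)) x a b c
      = iteratedFDeriv ℝ 3 f x ![a, b, c] := (iteratedFDeriv_three_apply f x ![a, b, c]).symm
    _ = fderiv ℝ (fun y => iteratedFDeriv ℝ 2 f y ![b, c]) x a :=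
      hd.iteratedFDeriv_succ_apply_left'
    _ = fderiv ℝ (fun y => iteratedFDeriv ℝ 2 f y ![c, b]) x a := by rw [hsymm.fderiv_eq]
    _ = iteratedFDeriv ℝ 3 f x ![a, c, b] :=
      (hd.iteratedFDeriv_succ_apply_left' (m := ![a, c, b])).symm
    _ = fderiv ℝ (fderiv ℝ (fderiv ℝ f)) x a c b := iteratedFDeriv_three_apply f x ![a, c, b]

end ThirdDerivative

theorem ContDiffAt.sum_signVec_mul_iteratedFDeriv_three {d : ℕ}
    {f : EuclideanSpace ℝ (Fin d) → ℝ} {x : EuclideanSpace ℝ (Fin d)} (hf : ContDiffAt ℝ 3 f x)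
    (i : Fin d) :
    ∑ s : Fin d → Bool, signVec d s i * iteratedFDeriv ℝ 3 f x (fun _ => signVec d s)
      = 2 ^ d * (iteratedFDeriv ℝ 3 f x
            ![EuclideanSpace.single i 1, EuclideanSpace.single i 1, EuclideanSpace.single i 1]
          + 3 * ∑ k ∈ univ.erase i, iteratedFDeriv ℝ 3 f x
              ![EuclideanSpace.single i 1, EuclideanSpace.single k 1,
                EuclideanSpace.single k 1]) := by
  simp only [iteratedFDeriv_three_apply]
  exact sum_signVec_mul_map_signVec_signVec_signVec _ hf.fderiv_fderiv_fderiv_comm_left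
    hf.fderiv_fderiv_fderiv_comm_right i

section CentralDifference

variable {E : Type*} [NormedAddCommGroup E] [NormedSpace ℝ E] {U : Set E}

lemma iteratedDeriv_comp_add_smul_of_contDiffOn {F : Type*} [NormedAddCommGroup F]
    [NormedSpace ℝ F] {f : E → F} {n : ℕ} (hU : IsOpen U) (hf : ContDiffOn ℝ n f U)
    (x v : E) {k : ℕ} (hk : k ≤ n) {t : ℝ} (ht : x + t • v ∈ U) :
    iteratedDeriv k (fun s : ℝ => f (x + s • v)) t
      = iteratedFDeriv ℝ k f (x + t • v) fun _ => v := by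
  induction k generalizing t with
  | zero => simp
  | succ k ih =>
    have hline : IsOpen {s : ℝ | x + s • v ∈ U} := hU.preimage (by fun_prop)
    have heq : iteratedDeriv k (fun s : ℝ => f (x + s • v))
        =ᶠ[𝓝 t] fun s => iteratedFDeriv ℝ k f (x + s • v) fun _ => v := by
      filter_upwards [hline.mem_nhds ht] with s hs using ih (by omega) hs
    rw [iteratedDeriv_succ, heq.deriv_eq]
    exact ((hf.contDiffAt (hU.mem_nhds ht)).of_le (by exact_mod_cast hk)).deriv_fderiv_add_smul

theorem tendsto_centralDifference_sub_fderiv_div_sq {f : E → ℝ} (hU : IsOpen U)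
    (hf : ContDiffOn ℝ 3 f U) {x : E} (hx : x ∈ U) (v : E) :
    Tendsto (fun h : ℝ => ((f (x + h • v) - f (x - h • v)) / (2 * h) - fderiv ℝ f x v) / h ^ 2)
      (𝓝[≠] 0) (𝓝 (iteratedFDeriv ℝ 3 f x (fun _ => v) / 6)) := by
  obtain ⟨r, hr, hball⟩ : ∃ r > 0, Metric.ball (0 : ℝ) r ⊆ {t | x + t • v ∈ U} :=
    Metric.isOpen_iff.mp (hU.preimage (by fun_prop)) 0 (by simpa using hx)
  set g : ℝ → ℝ := fun t => f (x + t • v)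
  have hg : ContDiffOn ℝ 3 g (Metric.ball 0 r) :=
    hf.comp (by fun_prop : ContDiff ℝ 3 fun t : ℝ => x + t • v).contDiffOn hball
  have hcoeff (k : ℕ) (hk : k ≤ 3) :
      iteratedDerivWithin k g (Metric.ball 0 r) 0 = iteratedFDeriv ℝ k f x fun _ => v := by
    rw [iteratedDerivWithin_of_isOpen Metric.isOpen_ball (Metric.mem_ball_self hr),
      iteratedDeriv_comp_add_smul_of_contDiffOn hU hf x v hk (by simpa using hx), zero_smul,
      add_zero]
  set R : ℝ → ℝ := fun t => g t - taylorWithinEval g 3 (Metric.ball 0 r) 0 t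
  have hR : R =o[𝓝 0] fun t => t ^ 3 := by
    have h := taylor_isLittleO (convex_ball 0 r) (Metric.mem_ball_self hr) hg
    rw [Metric.isOpen_ball.nhdsWithin_eq (Metric.mem_ball_self hr)] at h
    simpa only [sub_zero] using h
  have hodd : (fun t => R t - R (-t)) =o[𝓝 0] fun t => t ^ 3 := by
    refine hR.sub ?_
    have h := (hR.comp_tendsto (continuous_neg.tendsto' (0 : ℝ) 0 neg_zero)).neg_right
    exact h.congr_right fun t => by simp [Odd.neg_pow (by decide : Odd 3)]
  have hlim := ((hodd.tendsto_div_nhds_zero.mono_left (nhdsWithin_le_nhds (s := {0}ᶜ))).div_const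
    2).add_const (iteratedFDeriv ℝ 3 f x (fun _ => v) / 6)
  rw [zero_div, zero_add] at hlim
  refine hlim.congr' ?_
  filter_upwards [self_mem_nhdsWithin] with t (ht : t ≠ 0)
  have h1 := hcoeff 1 (by norm_num)
  have h3 := hcoeff 3 le_rfl
  rw [iteratedFDeriv_one_apply] at h1
  simp only [R, g, taylor_within_apply, Finset.sum_range_succ, Finset.sum_range_zero, h1, h3,
    neg_smul, ← sub_eq_add_neg, smul_eq_mul]
  field_simp
  norm_num [Nat.factorial]
  ring

end CentralDifference

/-- Bias of the simultaneous perturbation estimator (Theorem 1, bias part).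
Let `A i h` be the average over all sign vectors `Δ ∈ {-1,1}^d` of
`(f(x + hΔ) - f(x - hΔ))/(2h Δᵢ)`. If `f` is three times continuously differentiable on an
open set containing `x`, then `(A i h - ∂ᵢ f(x))/h² → (1/6)(∂³ᵢᵢᵢ f(x) + 3 ∑_{k≠i} ∂³ᵢₖₖ f(x))`
as `h → 0⁺`; in particular the bias `A i h - ∂ᵢ f(x)` is `O(h²)` as `h → 0⁺`. -/
theorem simultaneous_perturbation_bias (d : ℕ) (f : EuclideanSpace ℝ (Fin d) → ℝ)
    (x : EuclideanSpace ℝ (Fin d)) (U : Set (EuclideanSpace ℝ (Fin d)))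
    (hU : IsOpen U) (hxU : x ∈ U) (hf : ContDiffOn ℝ 3 f U) (i : Fin d)
    (A : ℝ → ℝ)
    (hA : ∀ h : ℝ, A h = (2 ^ d : ℝ)⁻¹ * ∑ s : Fin d → Bool,
        (f (x + h • signVec d s) - f (x - h • signVec d s)) / (2 * h * signVec d s i)) :
    Tendsto (fun h : ℝ => (A h - fderiv ℝ f x (EuclideanSpace.single i 1)) / h ^ 2)
        (nhdsWithin (0 : ℝ) (Set.Ioi 0))
        (nhds ((1 / 6) *
          (iteratedFDeriv ℝ 3 f x
              ![EuclideanSpace.single i 1, EuclideanSpace.single i 1, EuclideanSpace.single i 1]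
            + 3 * ∑ k ∈ Finset.univ.erase i,
                iteratedFDeriv ℝ 3 f x
                  ![EuclideanSpace.single i 1, EuclideanSpace.single k 1,
                    EuclideanSpace.single k 1])))
      ∧ (fun h : ℝ => A h - fderiv ℝ f x (EuclideanSpace.single i 1))
          =O[nhdsWithin (0 : ℝ) (Set.Ioi 0)] fun h => h ^ 2 := by
  set err : (Fin d → Bool) → ℝ → ℝ := fun s h =>
    ((f (x + h • signVec d s) - f (x - h • signVec d s)) / (2 * h) - fderiv ℝ f x (signVec d s))
      / h ^ 2
  have hbias (h : ℝ) : (A h - fderiv ℝ f x (EuclideanSpace.single i 1)) / h ^ 2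
      = (2 ^ d : ℝ)⁻¹ * ∑ s, signVec d s i * err s h := by
    rw [hA, inv_two_pow_mul_sum_div_mul_signVec_sub, mul_div_assoc, sum_div]
    simp only [err, mul_div_assoc]
  have hlim : Tendsto (fun h => (2 ^ d : ℝ)⁻¹ * ∑ s, signVec d s i * err s h) (𝓝[>] 0)
      (𝓝 ((2 ^ d : ℝ)⁻¹ * ∑ s, signVec d s i *
        (iteratedFDeriv ℝ 3 f x (fun _ => signVec d s) / 6))) :=
    (tendsto_finsetSum _ fun s _ =>
      ((tendsto_centralDifference_sub_fderiv_div_sq hU hf hxU (signVec d s)).mono_left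
        (nhdsWithin_mono _ fun t ht => ne_of_gt ht)).const_mul _).const_mul _
  refine (fun H => ⟨H, isBigO_of_div_tendsto_nhds ?_ _ H⟩) ?_
  · rw [funext hbias]
    convert hlim using 2
    simp only [mul_div_assoc', ← sum_div,
      (hf.contDiffAt (hU.mem_nhds hxU)).sum_signVec_mul_iteratedFDeriv_three i]
    field_simp
  · filter_upwards [self_mem_nhdsWithin] with h (hh : 0 < h) h0
    exact absurd h0 (by positivity)
end

section
/- Let X be a nonempty convex subset of a real inner product space (e.g. ℝ^m), let σ > 0, and let h be a real-valued function that is differentiable with gradient ∇h on an open set containing X and is σ-strongly convex on X, i.e. h(x') ≥ h(x) + ⟨∇h(x), x' − x⟩ + (σ/2)‖x' − x‖² for all x, x' ∈ X. Define the Bregman divergence D(p, x) = h(p) − h(x) − ⟨∇h(x), p − x⟩ for p, x ∈ X. Let x, p ∈ X, let y be a vector, and let x⁺ ∈ X be a minimizer over x' ∈ X of the map x' ↦ ⟨y, x − x'⟩ + D(x', x). Then: (i) D(p, x) ≥ (σ/2)‖p − x‖²; and (ii) D(p, x⁺) ≤ D(p, x) − D(x⁺, x) + ⟨y, x⁺ −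 p⟩ ≤ D(p, x) + ⟨y, x − p⟩ + (1/(2σ))‖y‖². -/
/-!
The first bound is the strong convexity inequality itself. For the second, the three-point
identity `D p x - D x⁺ x - D p x⁺ = ⟪∇h x⁺ - ∇h x, p - x⁺⟫` reduces it to first-order
optimality of `x⁺`: the prox objective has gradient `∇h x⁺ - ∇h x - y` at `x⁺`, which pairs
nonnegatively with every feasible direction `p - x⁺`. The third follows from
`D x⁺ x ≥ (σ/2)‖x⁺ - x‖²` and Young's inequality `⟪y, v⟫ ≤ (σ/2)‖v‖² + ‖y‖²/(2σ)`.
-/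

open scoped RealInnerProductSpace

section

variable {E : Type*} [NormedAddCommGroup E] [InnerProductSpace ℝ E]

def bregmanDiv (h : E → ℝ) (h' : E → E) (p x : E) : ℝ := h p - h x - ⟪h' x, p - x⟫

theorem mul_sq_norm_le_bregmanDiv {X : Set E} {σ : ℝ} {h : E → ℝ} {h' : E → E}
    (hstrong : ∀ x ∈ X, ∀ x' ∈ X, h x + ⟪h' x, x' - x⟫ + σ / 2 * ‖x' - x‖ ^ 2 ≤ h x')
    {p x : E} (hx : x ∈ X) (hp : p ∈ X) : σ / 2 * ‖p - x‖ ^ 2 ≤ bregmanDiv h h' p x := by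
  have := hstrong x hx p hp
  unfold bregmanDiv
  linarith

theorem bregmanDiv_three_point (h : E → ℝ) (h' : E → E) (p x z : E) :
    bregmanDiv h h' p x - bregmanDiv h h' z x - bregmanDiv h h' p z = ⟪h' z - h' x, p - z⟫ := by
  simp only [bregmanDiv, inner_sub_left, inner_sub_right]
  ring

theorem real_inner_le_mul_sq_add_sq_div {σ : ℝ} (hσ : 0 < σ) (u v : E) :
    ⟪u, v⟫ ≤ σ / 2 * ‖v‖ ^ 2 + 1 / (2 * σ) * ‖u‖ ^ 2 := by
  have key : 2 * σ * (‖u‖ * ‖v‖) ≤ (σ * ‖v‖) ^ 2 + ‖u‖ ^ 2 := by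
    nlinarith [sq_nonneg (σ * ‖v‖ - ‖u‖)]
  calc ⟪u, v⟫ ≤ ‖u‖ * ‖v‖ := real_inner_le_norm u v
    _ ≤ σ / 2 * ‖v‖ ^ 2 + 1 / (2 * σ) * ‖u‖ ^ 2 := by
      rw [← mul_le_mul_iff_right₀ (by positivity : 0 < 2 * σ)]
      field_simp
      linarith

variable [CompleteSpace E]

theorem IsMinOn.inner_gradient_sub_nonneg {f : E → ℝ} {s : Set E} {a b g : E}
    (hmin : IsMinOn f s a) (hs : Convex ℝ s) (ha : a ∈ s) (hb : b ∈ s)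
    (hf : HasGradientAt f g a) : 0 ≤ ⟪g, b - a⟫ := by
  simpa using hmin.localize.hasFDerivWithinAt_nonneg
    (hasGradientAt_iff_hasFDerivAt.mp hf).hasFDerivWithinAt
    (sub_mem_posTangentConeAt_of_segment_subset (hs.segment_subset ha hb))

theorem HasGradientAt.bregmanDiv_left {h : E → ℝ} {h' : E → E} {z : E}
    (hz : HasGradientAt h (h' z) z) (x : E) :
    HasGradientAt (fun w => bregmanDiv h h' w x) (h' z - h' x) z := by
  rw [hasGradientAt_iff_hasFDerivAt] at hz ⊢
  have hlin : HasFDerivAt (fun w => ⟪h' x, w - x⟫) (innerSL ℝ (h' x)) z := by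
    simpa [inner_sub_right] using ((innerSL ℝ (h' x)).hasFDerivAt).sub_const ⟪h' x, x⟫
  refine ((hz.sub_const (h x)).sub hlin).congr_fderiv ?_
  ext v
  simp

theorem prox_step_optimality {X : Set E} (hX : Convex ℝ X) {h : E → ℝ} {h' : E → E}
    {x y xplus p : E} (hxplusX : xplus ∈ X) (hp : p ∈ X)
    (hgrad : HasGradientAt h (h' xplus) xplus)
    (hmin : ∀ x' ∈ X,
      ⟪y, x - xplus⟫ + bregmanDiv h h' xplus x ≤ ⟪y, x - x'⟫ + bregmanDiv h h' x' x) :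
    0 ≤ ⟪h' xplus - h' x - y, p - xplus⟫ := by
  have hlin : HasFDerivAt (fun z => ⟪y, x - z⟫) (-innerSL ℝ y) xplus := by
    simpa [inner_sub_right] using (innerSL ℝ y).hasFDerivAt.const_sub ⟪y, x⟫
  have hobj : HasGradientAt (fun z => ⟪y, x - z⟫ + bregmanDiv h h' z x)
      (h' xplus - h' x - y) xplus := by
    rw [hasGradientAt_iff_hasFDerivAt]
    have hbreg := hasGradientAt_iff_hasFDerivAt.mp (hgrad.bregmanDiv_left x)
    refine (hlin.add hbreg).congr_fderiv ?_
    ext v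
    simp only [add_apply, neg_apply, innerSL_apply_apply,
      map_sub, sub_apply, InnerProductSpace.toDual_apply_apply]
    ring
  exact IsMinOn.inner_gradient_sub_nonneg (f := fun z => ⟪y, x - z⟫ + bregmanDiv h h' z x)
    hmin hX hxplusX hp hobj

end

theorem bregman_divergence_bounds_general {E : Type*} [NormedAddCommGroup E] [InnerProductSpace ℝ E] [CompleteSpace E]
    (X : Set E) (hXconv : Convex ℝ X)
    (σ : ℝ) (hσ : 0 < σ)
    (h : E → ℝ) (h' : E → E) (U : Set E) (hXU : X ⊆ U)
    (hgrad : ∀ z ∈ U, HasGradientAt h (h' z) z)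
    (hstrong : ∀ x ∈ X, ∀ x' ∈ X,
      h x + ⟪h' x, x' - x⟫ + σ / 2 * ‖x' - x‖ ^ 2 ≤ h x')
    (D : E → E → ℝ)
    (hD : ∀ p x, D p x = h p - h x - ⟪h' x, p - x⟫)
    (x p : E) (hx : x ∈ X) (hp : p ∈ X) (y : E) (xplus : E) (hxplusX : xplus ∈ X)
    (hxplusmin : ∀ x' ∈ X, ⟪y, x - xplus⟫ + D xplus x ≤ ⟪y, x - x'⟫ + D x' x) :
    σ / 2 * ‖p - x‖ ^ 2 ≤ D p x ∧
      D p xplus ≤ D p x - D xplus x + ⟪y, xplus - p⟫ ∧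
      D p x - D xplus x + ⟪y, xplus - p⟫ ≤ D p x + ⟪y, x - p⟫ + 1 / (2 * σ) * ‖y‖ ^ 2 := by
  obtain rfl : D = bregmanDiv h h' := funext fun p => funext (hD p)
  refine ⟨mul_sq_norm_le_bregmanDiv hstrong hx hp, ?_, ?_⟩
  · have hopt : 0 ≤ ⟪h' xplus - h' x - y, p - xplus⟫ :=
      prox_step_optimality hXconv hxplusX hp (hgrad xplus (hXU hxplusX)) hxplusmin
    have hthree := bregmanDiv_three_point h h' p x xplus
    rw [inner_sub_left] at hopt
    rw [← neg_sub p xplus, inner_neg_right]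
    linarith
  · have hlower := mul_sq_norm_le_bregmanDiv hstrong hx hxplusX
    have hyoung := real_inner_le_mul_sq_add_sq_div hσ y (xplus - x)
    have hsplit : ⟪y, xplus - p⟫ = ⟪y, xplus - x⟫ + ⟪y, x - p⟫ := by
      rw [← inner_add_right, sub_add_sub_cancel]
    linarith

/-- Proposition 1: upper and lower Bregman-divergence bounds for the mirror/prox step. Let `h`
be differentiable with gradient `h'` on an open set containing the convex set `X` and
`σ`-strongly convex on `X`, let `D p x = h p - h x - ⟪h' x, p - x⟫` be the associated Bregman
divergence, and let `x⁺ ∈ X` minimize `x' ↦ ⟪y, x - x'⟫ + D x' x` over `X`. Then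
`D p x ≥ (σ/2)‖p - x‖²` and
`D p x⁺ ≤ D p x - D x⁺ x + ⟪y, x⁺ - p⟫ ≤ D p x + ⟪y, x - p⟫ + ‖y‖²/(2σ)`. -/
theorem bregman_divergence_bounds {E : Type*} [NormedAddCommGroup E] [InnerProductSpace ℝ E] [CompleteSpace E]
    (X : Set E) (hXne : X.Nonempty) (hXconv : Convex ℝ X)
    (σ : ℝ) (hσ : 0 < σ)
    (h : E → ℝ) (h' : E → E) (U : Set E) (hU : IsOpen U) (hXU : X ⊆ U)
    (hgrad : ∀ z ∈ U, HasGradientAt h (h' z) z)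
    (hstrong : ∀ x ∈ X, ∀ x' ∈ X,
      h x + ⟪h' x, x' - x⟫ + σ / 2 * ‖x' - x‖ ^ 2 ≤ h x')
    (D : E → E → ℝ)
    (hD : ∀ p x, D p x = h p - h x - ⟪h' x, p - x⟫)
    (x p : E) (hx : x ∈ X) (hp : p ∈ X) (y : E) (xplus : E) (hxplusX : xplus ∈ X)
    (hxplusmin : ∀ x' ∈ X, ⟪y, x - xplus⟫ + D xplus x ≤ ⟪y, x - x'⟫ + D x' x) :
    σ / 2 * ‖p - x‖ ^ 2 ≤ D p x ∧
      D p xplus ≤ D p x - D xplus x + ⟪y, xplus - p⟫ ∧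
      D p x - D xplus x + ⟪y, xplus - p⟫ ≤ D p x + ⟪y, x - p⟫ + 1 / (2 * σ) * ‖y‖ ^ 2 :=
  bregman_divergence_bounds_general X hXconv σ hσ h h' U hXU hgrad hstrong D hD x p hx hp y xplus
    hxplusX hxplusmin
end

section
/- Let (a_n)_{n≥1} be a sequence of nonnegative real numbers and let P, Q, q be positive real numbers with P > q. Suppose that for every n ≥ 1, a_{n+1} ≤ (1 − P/(n+1)) a_n + Q/n^{1+q}. Then a_n = O(n^{−q}); that is, there exists a constant C > 0 such that a_n ≤ C n^{−q} for all n ≥ 1. -/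
/-!
The sequence `b m = C m^(-q)` decays by the factor `(1 + 1/m)^(-q) ≥ 1 - q/m` per step, while the
recursion contracts by `1 - P/(m+1)`. Since `P > q`, the difference is of order `(P - q)/m`, which
absorbs the forcing term `Q m^(-1-q)` as soon as `C ≥ 4Q/(P - q)`; so `b` is a supersolution for
large `m`, and enlarging `C` to dominate the finitely many initial terms, induction gives `a ≤ b`.
-/

open Filter

lemma one_sub_mul_le_one_add_rpow_neg {s q : ℝ} (hs : 0 ≤ s) (hq : 0 ≤ q) :
    1 - q * s ≤ (1 + s) ^ (-q) := by
  have hpos : 0 < 1 + s := by linarith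
  have hlog : Real.log (1 + s) ≤ s := by linarith [Real.log_le_sub_one_of_pos hpos]
  calc 1 - q * s ≤ 1 + (-q) * Real.log (1 + s) := by nlinarith
    _ ≤ Real.exp (-q * Real.log (1 + s)) := by
      linarith [Real.add_one_le_exp (-q * Real.log (1 + s))]
    _ = (1 + s) ^ (-q) := by rw [Real.rpow_def_of_pos hpos, mul_comm]

lemma rpow_neg_mul_one_sub_div_le {x q : ℝ} (hx : 0 < x) (hq : 0 ≤ q) :
    x ^ (-q) * (1 - q / x) ≤ (x + 1) ^ (-q) := by
  have hsplit : x + 1 = x * (1 + 1 / x) := by field_simp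
  rw [hsplit, Real.mul_rpow hx.le (by positivity), div_eq_mul_one_div q x]
  exact mul_le_mul_of_nonneg_left (one_sub_mul_le_one_add_rpow_neg (by positivity) hq)
    (Real.rpow_nonneg hx.le _)

lemma le_of_recurrence_le {a b c d : ℕ → ℝ} {N : ℕ} (hc : ∀ m ≥ N, 0 ≤ c m)
    (ha : ∀ m ≥ N, a (m + 1) ≤ c m * a m + d m)
    (hb : ∀ m ≥ N, c m * b m + d m ≤ b (m + 1))
    (hN : a N ≤ b N) : ∀ n ≥ N, a n ≤ b n := by
  intro n hn
  induction n, hn using Nat.le_induction with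
  | base => exact hN
  | succ m hm ih =>
    calc a (m + 1) ≤ c m * a m + d m := ha m hm
      _ ≤ c m * b m + d m := by gcongr; exact hc m hm
      _ ≤ b (m + 1) := hb m hm

lemma exists_le_mul_of_pos_on_Icc (a b : ℕ → ℝ) (M N : ℕ)
    (hb : ∀ n ∈ Set.Icc M N, 0 < b n) :
    ∃ C, ∀ n ∈ Set.Icc M N, a n ≤ C * b n := by
  obtain ⟨C, hC⟩ := ((Set.finite_Icc M N).image fun n => a n / b n).bddAbove
  refine ⟨C, fun n hn => ?_⟩
  rw [← div_le_iff₀ (hb n hn)]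
  exact hC (Set.mem_image_of_mem _ hn)

/-- `m ↦ C m^(-q)` is a supersolution of `x (m+1) = (1 - P/(m+1)) x m + Q / m^(1+q)` once
`m` is large enough that the margin `P/(m+1) - q/m` is at least `(P - q)/(4m)`. -/
lemma rpow_neg_supersolution {P Q q C m : ℝ} (hq : 0 ≤ q) (hQ : 0 ≤ Q) (hC : 0 ≤ C)
    (hm : 1 ≤ m) (hgap : 2 * q ≤ (P - q) * m) (hCQ : 4 * Q ≤ (P - q) * C) :
    (1 - P / (m + 1)) * (C * m ^ (-q)) + Q / m ^ (1 + q) ≤ C * (m + 1) ^ (-q) := by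
  have hm0 : 0 < m := by linarith
  have hcoef : (1 - P / (m + 1)) * C + Q / m ≤ C * (1 - q / m) := by
    have hkey : Q * (m + 1) ≤ C * ((P - q) * m - q) := by
      nlinarith [mul_le_mul_of_nonneg_left hgap hC, mul_le_mul_of_nonneg_right hCQ hm0.le,
        mul_nonneg hQ (sub_nonneg.2 hm)]
    have hdiff : C * (1 - q / m) - ((1 - P / (m + 1)) * C + Q / m)
        = (C * ((P - q) * m - q) - Q * (m + 1)) / (m * (m + 1)) := by
      field_simp; ring
    have : 0 ≤ C * (1 - q / m) - ((1 - P / (m + 1)) * C + Q / m) := by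
      rw [hdiff]; exact div_nonneg (by linarith) (by positivity)
    linarith
  calc (1 - P / (m + 1)) * (C * m ^ (-q)) + Q / m ^ (1 + q)
      = ((1 - P / (m + 1)) * C + Q / m) * m ^ (-q) := by
        rw [Real.rpow_add hm0, Real.rpow_one, Real.rpow_neg hm0.le]; field_simp
    _ ≤ C * (1 - q / m) * m ^ (-q) := by gcongr
    _ = C * (m ^ (-q) * (1 - q / m)) := by ring
    _ ≤ C * (m + 1) ^ (-q) := by gcongr; exact rpow_neg_mul_one_sub_div_le hm0 hq

theorem chung_recursive_sequence_general (a : ℕ → ℝ) (P Q q : ℝ)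
    (hQ : 0 < Q) (hq : 0 < q) (hPq : q < P)
    (hrec : ∀ n : ℕ, 1 ≤ n →
      a (n + 1) ≤ (1 - P / (n + 1)) * a n + Q / (n : ℝ) ^ (1 + q)) :
    ∃ C > (0 : ℝ), ∀ n : ℕ, 1 ≤ n → a n ≤ C * (n : ℝ) ^ (-q) := by
  have hε : 0 < P - q := sub_pos.2 hPq
  obtain ⟨N, hN⟩ : ∃ N : ℕ, ∀ m ≥ N, 1 ≤ m ∧ P ≤ m ∧ 2 * q ≤ (P - q) * m :=
    eventually_atTop.1 <| (eventually_ge_atTop 1).and <|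
      (tendsto_natCast_atTop_atTop.eventually_ge_atTop P).and <|
        (tendsto_natCast_atTop_atTop.const_mul_atTop hε).eventually_ge_atTop (2 * q)
  obtain ⟨C₀, hC₀⟩ := exists_le_mul_of_pos_on_Icc a (fun n => (n : ℝ) ^ (-q)) 1 N
    fun n hn => Real.rpow_pos_of_pos (Nat.cast_pos.2 hn.1) _
  set C := max C₀ (4 * Q / (P - q))
  have hCQ : 4 * Q ≤ (P - q) * C := by
    rw [← div_le_iff₀' hε]; exact le_max_right _ _
  have hC : 0 < C := lt_max_of_lt_right (by positivity)
  have hinit : ∀ n ∈ Set.Icc 1 N, a n ≤ C * (n : ℝ) ^ (-q) := fun n hn =>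
    (hC₀ n hn).trans <| by gcongr; exact le_max_left _ _
  have htail : ∀ n ≥ N, a n ≤ C * (n : ℝ) ^ (-q) := by
    refine le_of_recurrence_le (c := fun m => 1 - P / (m + 1))
      (d := fun m => Q / (m : ℝ) ^ (1 + q))
      (fun m hm => ?_) (fun m hm => hrec m (hN m hm).1) (fun m hm => ?_)
      (hinit N ⟨(hN N le_rfl).1, le_rfl⟩)
    · obtain ⟨-, hPm, -⟩ := hN m hm
      rw [sub_nonneg, div_le_one (by positivity)]; linarith
    · obtain ⟨h1m, -, hgap⟩ := hN m hm
      push_cast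
      exact rpow_neg_supersolution hq.le hQ.le hC.le (by exact_mod_cast h1m) hgap hCQ
  exact ⟨C, hC, fun n hn => (le_total n N).elim (fun h => hinit n ⟨hn, h⟩) (htail n)⟩

/-- Chung's lemma (Lemma 1): if a nonnegative sequence satisfies
`a (n+1) ≤ (1 - P/(n+1)) a n + Q / n^(1+q)` for all `n ≥ 1`, with `P, Q, q > 0` and `P > q`,
then `a n = O(n^(-q))`: there is `C > 0` with `a n ≤ C n^(-q)` for all `n ≥ 1`. -/
theorem chung_recursive_sequence (a : ℕ → ℝ) (P Q q : ℝ)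
    (hP : 0 < P) (hQ : 0 < Q) (hq : 0 < q) (hPq : q < P)
    (hnonneg : ∀ n : ℕ, 1 ≤ n → 0 ≤ a n)
    (hrec : ∀ n : ℕ, 1 ≤ n →
      a (n + 1) ≤ (1 - P / (n + 1)) * a n + Q / (n : ℝ) ^ (1 + q)) :
    ∃ C > (0 : ℝ), ∀ n : ℕ, 1 ≤ n → a n ≤ C * (n : ℝ) ^ (-q) :=
  chung_recursive_sequence_general a P Q q hQ hq hPq hrec
end

section
/- Let X be a nonempty closed convex subset of ℝ^d, let β > 0, and let φ : ℝ^d → ℝ^d be β-strongly monotone on X, i.e. ⟨φ(x) − φ(x'), x − x'⟩ ≥ (β/2)‖x − x'‖² for all x, x' ∈ X. Suppose x* ∈ X solves the variational inequality ⟨φ(x*), x − x*⟩ ≥ 0 for all x ∈ X. Let x ∈ X, g ∈ ℝ^d, γ > 0, and let x⁺ = P_X(x − γ g) be the Euclidean projection of x − γg onto X. Then (1/2)‖x⁺ − x*‖² ≤ (1 − βγ) · (1/2)‖x − x*‖² + γ ⟨φ(x) − g, x − x*⟩ + (γ²/2)‖g‖². -/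
open scoped RealInnerProductSpace

/-- One-step inequality in the proof of Theorem 2: if `φ` is `β`-strongly monotone on the
nonempty closed convex set `X`, `x*` solves the variational inequality, `x ∈ X`, `γ > 0`, and
`x⁺` is the Euclidean projection of `x - γ g` onto `X` (the point of `X` closest to `x - γ g`),
then `(1/2)‖x⁺ - x*‖² ≤ (1 - βγ)(1/2)‖x - x*‖² + γ⟪φ x - g, x - x*⟫ + (γ²/2)‖g‖²`. -/
theorem one_step_contraction (d : ℕ) (X : Set (EuclideanSpace ℝ (Fin d)))
    (hXne : X.Nonempty) (hXclosed : IsClosed X) (hXconv : Convex ℝ X)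
    (β : ℝ) (hβ : 0 < β)
    (φ : EuclideanSpace ℝ (Fin d) → EuclideanSpace ℝ (Fin d))
    (hmono : ∀ x ∈ X, ∀ x' ∈ X, β / 2 * ‖x - x'‖ ^ 2 ≤ ⟪φ x - φ x', x - x'⟫)
    (xstar : EuclideanSpace ℝ (Fin d)) (hxstar : xstar ∈ X)
    (hVI : ∀ x ∈ X, 0 ≤ ⟪φ xstar, x - xstar⟫)
    (x : EuclideanSpace ℝ (Fin d)) (hx : x ∈ X)
    (g : EuclideanSpace ℝ (Fin d)) (γ : ℝ) (hγ : 0 < γ)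
    (xplus : EuclideanSpace ℝ (Fin d)) (hxplusX : xplus ∈ X)
    (hxplusproj : ∀ z ∈ X, ‖x - γ • g - xplus‖ ≤ ‖x - γ • g - z‖) :
    1 / 2 * ‖xplus - xstar‖ ^ 2
      ≤ (1 - β * γ) * (1 / 2 * ‖x - xstar‖ ^ 2) + γ * ⟪φ x - g, x - xstar⟫
        + γ ^ 2 / 2 * ‖g‖ ^ 2 := by
  have : Nonempty ↥X := hXne.to_subtype
  set u := x - γ • g with hu
  have heq : ‖u - xplus‖ = ⨅ v : X, ‖u - v‖ := by
    have hbdd : BddBelow (Set.range fun v : X => ‖u - (v : EuclideanSpace ℝ (Fin d))‖) :=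
      ⟨0, by rintro r ⟨v, rfl⟩; exact norm_nonneg _⟩
    exact le_antisymm (le_ciInf fun v => hxplusproj _ v.2) (ciInf_le hbdd ⟨xplus, hxplusX⟩)
  have hproj := (norm_eq_iInf_iff_real_inner_le_zero hXconv hxplusX).mp heq
  have h1 := hproj xstar hxstar
  set a := xplus - xstar with ha
  set b := x - xstar with hb
  have e1 : u - xplus = b - γ • g - a := by rw [hu, ha, hb]; abel
  have e2 : xstar - xplus = -a := by rw [ha]; abel
  rw [e1, e2] at h1
  have h1' : ‖a‖ ^ 2 ≤ ⟪b - γ • g, a⟫ := by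
    have expand : ⟪b - γ • g - a, -a⟫ = -(⟪b - γ • g, a⟫ - ⟪a, a⟫) := by
      rw [inner_neg_right, inner_sub_left]
    rw [expand] at h1
    have := real_inner_self_eq_norm_sq a
    linarith
  have hCS : ⟪b - γ • g, a⟫ ≤ ‖b - γ • g‖ * ‖a‖ := real_inner_le_norm _ _
  have h2 : ‖a‖ ^ 2 ≤ ‖b - γ • g‖ ^ 2 := by
    nlinarith [norm_nonneg a, norm_nonneg (b - γ • g), sq_nonneg (‖a‖ - ‖b - γ • g‖)]
  have hnorm : ‖b - γ • g‖ ^ 2 = ‖b‖ ^ 2 - 2 * γ * ⟪g, b⟫ + γ ^ 2 * ‖g‖ ^ 2 := by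
    rw [norm_sub_sq_real, real_inner_smul_right, norm_smul, real_inner_comm]
    simp [abs_of_pos hγ, mul_pow]
    ring
  have hm := hmono x hx xstar hxstar
  have hv := hVI x hx
  have expand2 : ⟪φ x - g, b⟫ = ⟪φ x, b⟫ - ⟪g, b⟫ := inner_sub_left _ _ _
  have expand3 : ⟪φ x - φ xstar, b⟫ = ⟪φ x, b⟫ - ⟪φ xstar, b⟫ := inner_sub_left _ _ _
  rw [← hb] at hm hv
  rw [expand3] at hm
  rw [expand2]
  nlinarith [hγ.le]
end

section
/- Let X be a nonempty compact convex subset of ℝ^d, let β > 0, and let φ : ℝ^d → ℝ^d be β-strongly monotone on X, i.e. ⟨φ(x) − φ(x'), x − x'⟩ ≥ (β/2)‖x − x'‖² for all x, x' ∈ X, and let x* ∈ X solve the variational inequality ⟨φ(x*), x − x*⟩ ≥ 0 for all x ∈ X. On a probability space with filtration (𝓕_n)_{n≥0}, let x⁰ ∈ X be 𝓕₀-measurable and for n ≥ 1 let g^n be an 𝓕_n-measurable ℝ^d-valued random vector and define x^n = P_X(x^{n−1} − (γ/n) g^n), where γ > 0 satisfies βγ > 1. Fix constants A, B > 0 and p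 > 1, and assume that almost surely for every n ≥ 1: ‖E[g^n | 𝓕_{n−1}] − φ(x^{n−1})‖ ≤ A n^{−(1+p)/2} and E[‖g^n‖² | 𝓕_{n−1}] ≤ B. Then there exists a constant C > 0 such that E‖x^n − x*‖² ≤ C n^{−1} for all n ≥ 1; i.e. E‖x^n − x*‖² = O(n^{−1}). -/
open MeasureTheory ProbabilityTheory
open scoped RealInnerProductSpace

/-!
Projecting onto the convex set `X` does not increase the distance to `x* ∈ X`, so
`‖xⁿ - x*‖² ≤ ‖xⁿ⁻¹ - x*‖² - 2 (γ/n) ⟪gⁿ, xⁿ⁻¹ - x*⟫ + (γ/n)² ‖gⁿ‖²`.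
Conditioning on `𝓕ₙ₋₁` replaces `gⁿ` by its conditional mean in the cross term; strong
monotonicity and the variational inequality at `x*` bound that term below by
`β/2 ‖xⁿ⁻¹ - x*‖²` up to the bias, and the second-moment bound controls the last term. With the
diameter of `X` bounding the bias contribution, `aₙ = E‖xⁿ - x*‖²` satisfies Chung's recursion
`aₙ ≤ (1 - βγ/n) aₙ₋₁ + K/n²`, whose solutions are `O(1/n)` precisely because `βγ > 1`.
-/

section NearestPoint

variable {E : Type*} [NormedAddCommGroup E] {K : Set E}

def IsNearestPoint (K : Set E) (u v : E) : Prop :=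
  v ∈ K ∧ ∀ z ∈ K, ‖u - v‖ ≤ ‖u - z‖

lemma IsNearestPoint.self {z : E} (hz : z ∈ K) : IsNearestPoint K z z :=
  ⟨hz, fun w _ => by simp⟩

variable [InnerProductSpace ℝ E]

namespace IsNearestPoint

variable {u u' v v' : E}

lemma inner_sub_nonpos (hK : Convex ℝ K) (h : IsNearestPoint K u v) {w : E} (hw : w ∈ K) :
    ⟪u - v, w - v⟫ ≤ 0 := by
  have : Nonempty K := ⟨⟨v, h.1⟩⟩
  refine (norm_eq_iInf_iff_real_inner_le_zero hK h.1).1 (le_antisymm ?_ ?_) w hw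
  · exact le_ciInf fun z => h.2 z z.2
  · exact ciInf_le ⟨0, Set.forall_mem_range.2 fun _ => norm_nonneg _⟩ (⟨v, h.1⟩ : K)

lemma norm_sub_le (hK : Convex ℝ K) (h : IsNearestPoint K u v) (h' : IsNearestPoint K u' v') :
    ‖v - v'‖ ≤ ‖u - u'‖ := by
  have key : ‖v - v'‖ ^ 2 ≤ ⟪u - u', v - v'⟫ := by
    have h₁ := h.inner_sub_nonpos hK h'.1
    have h₂ := h'.inner_sub_nonpos hK h.1
    have e : ⟪u - u', v - v'⟫ = ‖v - v'‖ ^ 2 - ⟪u - v, v' - v⟫ - ⟪u' - v', v - v'⟫ := by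
      rw [← real_inner_self_eq_norm_sq]
      simp only [inner_sub_left, inner_sub_right, real_inner_comm]
      ring
    linarith
  have hcs := real_inner_le_norm (u - u') (v - v')
  nlinarith [norm_nonneg (v - v'), norm_nonneg (u - u')]

end IsNearestPoint

lemma exists_isNearestPoint (hne : K.Nonempty) (hc : IsComplete K) (hK : Convex ℝ K) (u : E) :
    ∃ v, IsNearestPoint K u v := by
  obtain ⟨v, hv, hinf⟩ := exists_norm_eq_iInf_of_complete_convex hne hc hK u
  refine ⟨v, hv, fun z hz => hinf ▸ ?_⟩
  exact ciInf_le ⟨0, Set.forall_mem_range.2 fun _ => norm_nonneg _⟩ (⟨z, hz⟩ : K)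

lemma stronglyMeasurable_of_isNearestPoint {Ω : Type*} {m : MeasurableSpace Ω}
    (hne : K.Nonempty) (hc : IsComplete K) (hK : Convex ℝ K) {f y : Ω → E}
    (hf : StronglyMeasurable[m] f) (hy : ∀ ω, IsNearestPoint K (f ω) (y ω)) :
    StronglyMeasurable[m] y := by
  choose P hP using exists_isNearestPoint hne hc hK
  have hPcont : Continuous P :=
    (LipschitzWith.of_dist_le_mul (K := 1) fun u u' => by
      simpa [dist_eq_norm] using (hP u).norm_sub_le hK (hP u')).continuous
  have hyP : y = P ∘ f := funext fun ω => by
    simpa [sub_eq_zero] using (hy ω).norm_sub_le hK (hP (f ω))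
  exact hyP ▸ hPcont.comp_stronglyMeasurable hf

lemma stronglyAdapted_of_isNearestPoint {Ω : Type*} {mΩ : MeasurableSpace Ω}
    (hne : K.Nonempty) (hc : IsComplete K) (hK : Convex ℝ K) {𝓕 : Filtration ℕ mΩ}
    {x g : ℕ → Ω → E} {η : ℕ → ℝ}
    (hx₀ : StronglyMeasurable[𝓕 0] (x 0)) (hg : ∀ n, StronglyMeasurable[𝓕 (n + 1)] (g (n + 1)))
    (hx : ∀ n ω, IsNearestPoint K (x n ω - η n • g (n + 1) ω) (x (n + 1) ω)) :
    StronglyAdapted 𝓕 x := by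
  intro n
  induction n with
  | zero => exact hx₀
  | succ n ih =>
    exact stronglyMeasurable_of_isNearestPoint hne hc hK
      ((ih.mono (𝓕.mono n.le_succ)).sub ((hg n).const_smul (η n))) (hx n)

end NearestPoint

lemma le_inner_of_strongMonotone {E : Type*} [NormedAddCommGroup E] [InnerProductSpace ℝ E]
    {φ : E → E} {y x' h : E} {β δ D : ℝ}
    (hmono : β / 2 * ‖y - x'‖ ^ 2 ≤ ⟪φ y - φ x', y - x'⟫) (hVI : 0 ≤ ⟪φ x', y - x'⟫)
    (hh : ‖h - φ y‖ ≤ δ) (hD : ‖y - x'‖ ≤ D) :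
    β / 2 * ‖y - x'‖ ^ 2 - δ * D ≤ ⟪h, y - x'⟫ := by
  have hsplit : ⟪h, y - x'⟫ = ⟪φ y - φ x', y - x'⟫ + ⟪φ x', y - x'⟫ + ⟪h - φ y, y - x'⟫ := by
    rw [← inner_add_left, ← inner_add_left]
    congr 1
    abel
  have hbias : -(δ * D) ≤ ⟪h - φ y, y - x'⟫ :=
    neg_le_of_abs_le <| (abs_real_inner_le_norm _ _).trans <|
      mul_le_mul hh hD (norm_nonneg _) ((norm_nonneg _).trans hh)
  linarith

section StochasticStep

variable {Ω : Type*} {m mΩ : MeasurableSpace Ω} {μ : Measure Ω}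
  {E : Type*} [NormedAddCommGroup E] [InnerProductSpace ℝ E] [CompleteSpace E]

lemma integral_inner_condExp (hm : m ≤ mΩ) [SigmaFinite (μ.trim hm)] {g w : Ω → E}
    (hw : StronglyMeasurable[m] w) (hg : Integrable g μ)
    (hgw : Integrable (fun ω => ⟪g ω, w ω⟫) μ) :
    ∫ ω, ⟪μ[g|m] ω, w ω⟫ ∂μ = ∫ ω, ⟪g ω, w ω⟫ ∂μ := by
  rw [← integral_condExp hm (f := fun ω => ⟪g ω, w ω⟫)]
  refine integral_congr_ae ?_
  exact (condExp_bilin_of_stronglyMeasurable_right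
    (innerSL ℝ (E := E) : E →L[ℝ] E →L[ℝ] ℝ) hw hgw hg).symm

lemma integral_le_of_condExp_le [IsProbabilityMeasure μ] (hm : m ≤ mΩ) {f : Ω → ℝ} {B : ℝ}
    (hf : ∀ᵐ ω ∂μ, μ[f|m] ω ≤ B) : ∫ ω, f ω ∂μ ≤ B := by
  have : SigmaFinite (μ.trim hm) := by
    have := isFiniteMeasure_trim (μ := μ) hm; infer_instance
  calc ∫ ω, f ω ∂μ = ∫ ω, μ[f|m] ω ∂μ := (integral_condExp hm).symm
    _ ≤ ∫ _, B ∂μ := integral_mono_ae integrable_condExp (integrable_const B) hf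
    _ = B := by simp

lemma integral_norm_sq_le_of_drift [IsProbabilityMeasure μ] (hm : m ≤ mΩ)
    {w G y : Ω → E} {η β ε B D : ℝ} (hη : 0 ≤ η)
    (hw : StronglyMeasurable[m] w) (hwD : ∀ ω, ‖w ω‖ ≤ D) (hG : MemLp G 2 μ)
    (hy : ∀ ω, ‖y ω‖ ≤ ‖w ω - η • G ω‖)
    (hdrift : ∀ᵐ ω ∂μ, β / 2 * ‖w ω‖ ^ 2 - ε ≤ ⟪μ[G|m] ω, w ω⟫)
    (hmom : ∀ᵐ ω ∂μ, μ[fun ω => ‖G ω‖ ^ 2|m] ω ≤ B) :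
    ∫ ω, ‖y ω‖ ^ 2 ∂μ ≤ (1 - η * β) * ∫ ω, ‖w ω‖ ^ 2 ∂μ + 2 * η * ε + η ^ 2 * B := by
  have : SigmaFinite (μ.trim hm) := by
    have := isFiniteMeasure_trim (μ := μ) hm; infer_instance
  have hwae : AEStronglyMeasurable w μ := (hw.mono hm).aestronglyMeasurable
  have hbdd_inner : ∀ {h : Ω → E}, Integrable h μ → Integrable (fun ω => ⟪h ω, w ω⟫) μ :=
    fun hh => hh.norm.mul_const D |>.mono' (hh.1.inner hwae) <| .of_forall fun ω =>
      (norm_inner_le_norm _ _).trans (mul_le_mul_of_nonneg_left (hwD ω) (norm_nonneg _))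
  have hw2 : Integrable (fun ω => ‖w ω‖ ^ 2) μ :=
    (integrable_const (D ^ 2)).mono' (hwae.norm.pow 2) <| .of_forall fun ω => by
      simpa using pow_le_pow_left₀ (norm_nonneg _) (hwD ω) 2
  have hGw := hbdd_inner (hG.integrable one_le_two)
  have hG2 : Integrable (fun ω => ‖G ω‖ ^ 2) μ := hG.integrable_norm_pow two_ne_zero
  have hexpand : ∀ ω, ‖w ω - η • G ω‖ ^ 2
      = ‖w ω‖ ^ 2 - 2 * η * ⟪G ω, w ω⟫ + η ^ 2 * ‖G ω‖ ^ 2 := fun ω => by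
    rw [norm_sub_sq_real, real_inner_smul_right, real_inner_comm, norm_smul, mul_pow,
      Real.norm_eq_abs, sq_abs]
    ring
  have hcross : β / 2 * ∫ ω, ‖w ω‖ ^ 2 ∂μ - ε ≤ ∫ ω, ⟪G ω, w ω⟫ ∂μ := by
    rw [← integral_inner_condExp hm hw (hG.integrable one_le_two) hGw, ← integral_const_mul]
    have hlow : Integrable (fun ω => β / 2 * ‖w ω‖ ^ 2 - ε) μ :=
      (hw2.const_mul _).sub (integrable_const ε)
    have := integral_mono_ae hlow (hbdd_inner integrable_condExp) hdrift
    rwa [integral_sub (hw2.const_mul _) (integrable_const ε), integral_const, probReal_univ,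
      one_smul] at this
  have hsecond := integral_le_of_condExp_le hm hmom
  have hdiff : Integrable (fun ω => ‖w ω‖ ^ 2 - 2 * η * ⟪G ω, w ω⟫) μ :=
    hw2.sub (hGw.const_mul _)
  calc ∫ ω, ‖y ω‖ ^ 2 ∂μ
      ≤ ∫ ω, ‖w ω‖ ^ 2 - 2 * η * ⟪G ω, w ω⟫ + η ^ 2 * ‖G ω‖ ^ 2 ∂μ := by
        refine integral_mono_of_nonneg (.of_forall fun ω => sq_nonneg _)
          (hdiff.add (hG2.const_mul _)) (.of_forall fun ω => ?_)
        exact (pow_le_pow_left₀ (norm_nonneg _) (hy ω) 2).trans_eq (hexpand ω)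
    _ = ∫ ω, ‖w ω‖ ^ 2 ∂μ - 2 * η * ∫ ω, ⟪G ω, w ω⟫ ∂μ + η ^ 2 * ∫ ω, ‖G ω‖ ^ 2 ∂μ := by
        rw [integral_add hdiff (hG2.const_mul _),
          integral_sub hw2 (hGw.const_mul _), integral_const_mul, integral_const_mul]
    _ ≤ (1 - η * β) * ∫ ω, ‖w ω‖ ^ 2 ∂μ + 2 * η * ε + η ^ 2 * B := by
        nlinarith [mul_le_mul_of_nonneg_left hcross (by positivity : 0 ≤ 2 * η),
          mul_le_mul_of_nonneg_left hsecond (sq_nonneg η)]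

end StochasticStep

lemma le_div_of_chung_recursion {a : ℕ → ℝ} {c K C : ℝ} (hc : 1 < c) (ha : ∀ n, 0 ≤ a n)
    (h1 : a 1 ≤ C) (hKC : K ≤ C) (hKc : K ≤ (c - 1) * C)
    (hrec : ∀ n : ℕ, 1 ≤ n → a (n + 1) ≤ (1 - c / (n + 1)) * a n + K / (n + 1) ^ 2) :
    ∀ n : ℕ, 1 ≤ n → a n ≤ C / n := by
  have hC : 0 ≤ C := (ha 1).trans h1
  intro n hn
  induction n, hn using Nat.le_induction with
  | base => simpa using h1
  | succ n hn ih =>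
    have hn0 : (0 : ℝ) < n := by exact_mod_cast hn
    push_cast
    rcases le_total (1 - c / (n + 1)) 0 with hneg | hpos
    · have hK : K / (n + 1) ^ 2 ≤ C / (n + 1) := by
        rw [div_le_div_iff₀ (by positivity) (by positivity)]
        nlinarith [mul_nonneg (mul_nonneg hC hn0.le) (by positivity : (0 : ℝ) ≤ n + 1)]
      nlinarith [mul_nonpos_of_nonpos_of_nonneg hneg (ha n), hrec n hn]
    · have hgap : C / (n + 1) - ((1 - c / (n + 1)) * (C / n) + K / (n + 1) ^ 2)
          = ((c - 1) * C * (n + 1) - K * n) / (n * (n + 1) ^ 2) := by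
        field_simp
        ring
      have hnum : 0 ≤ (c - 1) * C * (n + 1) - K * n := by nlinarith
      calc a (n + 1) ≤ (1 - c / (n + 1)) * (C / n) + K / (n + 1) ^ 2 := by
            nlinarith [hrec n hn, mul_le_mul_of_nonneg_left ih hpos]
        _ ≤ C / (n + 1) := by
            rw [← sub_nonneg, hgap]
            positivity

lemma exists_pos_le_mul_inv_of_chung_recursion {a : ℕ → ℝ} {c K : ℝ} (hc : 1 < c) (hK : 0 < K)
    (ha : ∀ n, 0 ≤ a n)
    (hrec : ∀ n : ℕ, 1 ≤ n → a (n + 1) ≤ (1 - c / (n + 1)) * a n + K / (n + 1) ^ 2) :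
    ∃ C > 0, ∀ n : ℕ, 1 ≤ n → a n ≤ C * (n : ℝ)⁻¹ := by
  have hc' : 0 < c - 1 := by linarith
  have hKc : 0 < K / (c - 1) := div_pos hK hc'
  refine ⟨a 1 + K + K / (c - 1), by linarith [ha 1], fun n hn => ?_⟩
  rw [← div_eq_mul_inv]
  refine le_div_of_chung_recursion hc ha (by linarith) (by linarith [ha 1]) ?_ hrec n hn
  rw [mul_add, mul_div_cancel₀ _ hc'.ne']
  nlinarith [ha 1]

theorem sdl_mean_square_rate_b_general
    (d : ℕ) (X : Set (EuclideanSpace ℝ (Fin d)))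
    (hXcompact : IsCompact X) (hXconv : Convex ℝ X)
    (β : ℝ)
    (φ : EuclideanSpace ℝ (Fin d) → EuclideanSpace ℝ (Fin d))
    (hmono : ∀ y ∈ X, ∀ y' ∈ X, β / 2 * ‖y - y'‖ ^ 2 ≤ ⟪φ y - φ y', y - y'⟫)
    (xstar : EuclideanSpace ℝ (Fin d)) (hxstar : xstar ∈ X)
    (hVI : ∀ y ∈ X, 0 ≤ ⟪φ xstar, y - xstar⟫)
    {Ω : Type*} {mΩ : MeasurableSpace Ω} (μ : Measure Ω) [IsProbabilityMeasure μ]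
    (𝓕 : Filtration ℕ mΩ)
    (x g : ℕ → Ω → EuclideanSpace ℝ (Fin d))
    (γ : ℝ) (hγ : 0 < γ) (hβγ : 1 < β * γ)
    (hx0meas : StronglyMeasurable[𝓕 0] (x 0)) (hx0X : ∀ ω, x 0 ω ∈ X)
    (hgmeas : ∀ n : ℕ, 1 ≤ n → StronglyMeasurable[𝓕 n] (g n))
    (hgL2 : ∀ n : ℕ, 1 ≤ n → MemLp (g n) 2 μ)
    (hiter : ∀ n : ℕ, 1 ≤ n → ∀ ω, x n ω ∈ X ∧
      ∀ z ∈ X, ‖x (n - 1) ω - (γ / n) • g n ω - x n ω‖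
        ≤ ‖x (n - 1) ω - (γ / n) • g n ω - z‖)
    (A B p : ℝ) (hA : 0 < A) (hB : 0 < B) (hp : 1 < p)
    (hbias : ∀ᵐ ω ∂μ, ∀ n : ℕ, 1 ≤ n →
      ‖(μ[g n | 𝓕 (n - 1)]) ω - φ (x (n - 1) ω)‖ ≤ A * (n : ℝ) ^ (-(1 + p) / 2))
    (hmoment : ∀ᵐ ω ∂μ, ∀ n : ℕ, 1 ≤ n →
      (μ[fun ω' => ‖g n ω'‖ ^ 2 | 𝓕 (n - 1)]) ω ≤ B) :
    ∃ C > (0 : ℝ), ∀ n : ℕ, 1 ≤ n →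
      ∫ ω, ‖x n ω - xstar‖ ^ 2 ∂μ ≤ C * (n : ℝ)⁻¹ := by
  have hproj : ∀ n ω, IsNearestPoint X (x n ω - (γ / (n + 1 : ℕ)) • g (n + 1) ω) (x (n + 1) ω) :=
    fun n => hiter (n + 1) n.succ_pos
  have hxmeas : StronglyAdapted 𝓕 x := stronglyAdapted_of_isNearestPoint ⟨xstar, hxstar⟩
    hXcompact.isComplete hXconv hx0meas (fun n => hgmeas (n + 1) n.succ_pos) hproj
  have hxX : ∀ n ω, x n ω ∈ X
    | 0, ω => hx0X ω
    | n + 1, ω => (hproj n ω).1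
  obtain ⟨D, hD, hXD⟩ := hXcompact.isBounded.subset_closedBall_lt 0 xstar
  have hxD : ∀ n ω, ‖x n ω - xstar‖ ≤ D := fun n ω => mem_closedBall_iff_norm.1 (hXD (hxX n ω))
  refine exists_pos_le_mul_inv_of_chung_recursion hβγ (K := 2 * γ * A * D + γ ^ 2 * B)
    (by positivity) (fun n => integral_nonneg fun ω => sq_nonneg _) fun n _ => ?_
  set N : ℝ := ((n + 1 : ℕ) : ℝ)
  have hN : (1 : ℝ) ≤ N := by simp [N]
  -- As `p > 1`, the bias is `O(1/N)`, so its contribution to the step is `O(1/N²)`.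
  have hq : N ^ (-(1 + p) / 2) ≤ N⁻¹ := by
    simpa [Real.rpow_neg_one] using
      Real.rpow_le_rpow_of_exponent_le hN (show -(1 + p) / 2 ≤ (-1 : ℝ) by linarith)
  have hstep := integral_norm_sq_le_of_drift (𝓕.le n) (w := fun ω => x n ω - xstar)
    (η := γ / N) (ε := A * N⁻¹ * D) (div_nonneg hγ.le (by positivity))
    ((hxmeas n).sub stronglyMeasurable_const) (hxD n) (hgL2 (n + 1) n.succ_pos)
    (fun ω => by simpa only [sub_right_comm] using (hproj n ω).norm_sub_le hXconv (.self hxstar))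
    (hbias.mono fun ω hω => le_inner_of_strongMonotone (hmono _ (hxX n ω) _ hxstar)
      (hVI _ (hxX n ω)) ((hω (n + 1) n.succ_pos).trans (by gcongr)) (hxD n ω))
    (hmoment.mono fun ω hω => hω (n + 1) n.succ_pos)
  refine hstep.trans_eq ?_
  simp only [N, Nat.cast_succ]
  field_simp
  ring

/-- Theorem 2(b): mean-square convergence rate `O(n^{-1})` (`p > 1`) of the
stochastic distributed learning iteration `xⁿ = P_X(xⁿ⁻¹ - (γ/n) gⁿ)` towards the
variational-inequality solution `x*` of a `β`-strongly monotone game, under the conditional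
bias bound `‖E[gⁿ|𝓕ₙ₋₁] - φ(xⁿ⁻¹)‖ ≤ A n^{-(1+p)/2}` and conditional second-moment bound
`E[‖gⁿ‖²|𝓕ₙ₋₁] ≤ B`, with `βγ > 1`. The projection `P_X` is encoded by requiring
`xⁿ ∈ X` to be a closest point of `X` to `xⁿ⁻¹ - (γ/n) gⁿ`. -/
theorem sdl_mean_square_rate_b
    (d : ℕ) (X : Set (EuclideanSpace ℝ (Fin d)))
    (hXne : X.Nonempty) (hXcompact : IsCompact X) (hXconv : Convex ℝ X)
    (β : ℝ) (hβ : 0 < β)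
    (φ : EuclideanSpace ℝ (Fin d) → EuclideanSpace ℝ (Fin d))
    (hmono : ∀ y ∈ X, ∀ y' ∈ X, β / 2 * ‖y - y'‖ ^ 2 ≤ ⟪φ y - φ y', y - y'⟫)
    (xstar : EuclideanSpace ℝ (Fin d)) (hxstar : xstar ∈ X)
    (hVI : ∀ y ∈ X, 0 ≤ ⟪φ xstar, y - xstar⟫)
    {Ω : Type*} {mΩ : MeasurableSpace Ω} (μ : Measure Ω) [IsProbabilityMeasure μ]
    (𝓕 : Filtration ℕ mΩ)
    (x g : ℕ → Ω → EuclideanSpace ℝ (Fin d))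
    (γ : ℝ) (hγ : 0 < γ) (hβγ : 1 < β * γ)
    (hx0meas : StronglyMeasurable[𝓕 0] (x 0)) (hx0X : ∀ ω, x 0 ω ∈ X)
    (hgmeas : ∀ n : ℕ, 1 ≤ n → StronglyMeasurable[𝓕 n] (g n))
    (hgL2 : ∀ n : ℕ, 1 ≤ n → MemLp (g n) 2 μ)
    (hiter : ∀ n : ℕ, 1 ≤ n → ∀ ω, x n ω ∈ X ∧
      ∀ z ∈ X, ‖x (n - 1) ω - (γ / n) • g n ω - x n ω‖
        ≤ ‖x (n - 1) ω - (γ / n) • g n ω - z‖)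
    (A B p : ℝ) (hA : 0 < A) (hB : 0 < B) (hp : 1 < p)
    (hbias : ∀ᵐ ω ∂μ, ∀ n : ℕ, 1 ≤ n →
      ‖(μ[g n | 𝓕 (n - 1)]) ω - φ (x (n - 1) ω)‖ ≤ A * (n : ℝ) ^ (-(1 + p) / 2))
    (hmoment : ∀ᵐ ω ∂μ, ∀ n : ℕ, 1 ≤ n →
      (μ[fun ω' => ‖g n ω'‖ ^ 2 | 𝓕 (n - 1)]) ω ≤ B) :
    ∃ C > (0 : ℝ), ∀ n : ℕ, 1 ≤ n →
      ∫ ω, ‖x n ω - xstar‖ ^ 2 ∂μ ≤ C * (n : ℝ)⁻¹ :=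
  sdl_mean_square_rate_b_general d X hXcompact hXconv β φ hmono xstar hxstar hVI μ 𝓕 x g γ hγ hβγ
    hx0meas hx0X hgmeas hgL2 hiter A B p hA hB hp hbias hmoment
end
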